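/- Let X be a Polish space, R ⊆ C_b(X) a subring that approximates open sets, and V a normed R-module. Then for every φ ∈ R, v ∈ V and x ∈ X one has |φ v|_g(x) = |φ(x)| · |v|_g(x), where |·|_g denotes the germ seminorm. -/

import Mathlib

open BoundedContinuousFunction Filter Topology Set MeasureTheory ENNReal

noncomputable section

/-- A subring `R ⊆ C_b(X)` approximates open sets. -/
structure ApproximatesOpenSets {X : Type*} [TopologicalSpace X] (R : Subring (X →ᵇ ℝ)) : Prop where
  const_mem : ∀ c : ℝ, const X c ∈ R
  sup_mem : ∀ f g : X →ᵇ ℝ, f ∈ R → g ∈ R → ∃ h ∈ R, ∀ x, h x = max (f x) (g x)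
  inf_mem : ∀ f g : X →ᵇ ℝ, f ∈ R → g ∈ R → ∃ h ∈ R, ∀ x, h x = min (f x) (g x)
  const_mul_mem : ∀ (c : ℝ) (f : X →ᵇ ℝ), f ∈ R → const X c * f ∈ R
  approx : ∀ A : Set X, IsOpen A →
    ∃ f : ℕ → X →ᵇ ℝ, (∀ k, f k ∈ R) ∧ (∀ x, Monotone fun k => f k x) ∧
      ∀ x, Tendsto (fun k => f k x) atTop (𝓝 (A.indicator (fun _ => (1:ℝ)) x))

/-- The action of constant functions in `R` agrees with the real scalar multiplication. -/
def ConstSMulCompat {X : Type*} [TopologicalSpace X] (R : Subring (X →ᵇ ℝ)) (V : Type*)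
    [NormedAddCommGroup V] [NormedSpace ℝ V] [Module R V] : Prop :=
  ∀ (c : ℝ) (hc : const X c ∈ R) (v : V), (⟨const X c, hc⟩ : ↥R) • v = c • v

/-- The compatibility inequality defining a normed `R`-module. -/
def NormSMulCompat {X : Type*} [TopologicalSpace X] (R : Subring (X →ᵇ ℝ)) (V : Type*)
    [NormedAddCommGroup V] [Module R V] : Prop :=
  ∀ (s : Finset ℕ) (f : ℕ → ↥R) (v : ℕ → V) (M K : ℝ), 0 ≤ M → 0 ≤ K →
    ((s : Set ℕ).Pairwise fun i j =>
      Disjoint (tsupport ⇑((f i : X →ᵇ ℝ))) (tsupport ⇑((f j : X →ᵇ ℝ)))) →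
    (∀ i ∈ s, ‖(f i : X →ᵇ ℝ)‖ ≤ M) → (∀ i ∈ s, ‖v i‖ ≤ K) →
    ‖∑ i ∈ s, f i • v i‖ ≤ M * K

/-- The local seminorm `‖v‖_{|A}`. -/
def locNorm {X : Type*} [TopologicalSpace X] (R : Subring (X →ᵇ ℝ)) {V : Type*}
    [NormedAddCommGroup V] [Module R V] (A : Set X) (v : V) : ℝ :=
  sSup {r : ℝ | ∃ f : ↥R, tsupport ⇑((f : X →ᵇ ℝ)) ⊆ A ∧ ‖(f : X →ᵇ ℝ)‖ ≤ 1 ∧ r = ‖f • v‖}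

/-- The germ seminorm `|v|_g(x)`. -/
def germNorm {X : Type*} [TopologicalSpace X] (R : Subring (X →ᵇ ℝ)) {V : Type*}
    [NormedAddCommGroup V] [Module R V] (v : V) (x : X) : ℝ :=
  sInf {r : ℝ | ∃ A : Set X, IsOpen A ∧ x ∈ A ∧ r = locNorm R A v}

/-- `supp v ⊆ B`: there is a closed set `C ⊆ B` with `‖v‖_{|X∖C} = 0`. -/
def suppIn {X : Type*} [TopologicalSpace X] (R : Subring (X →ᵇ ℝ)) {V : Type*}
    [NormedAddCommGroup V] [Module R V] (v : V) (B : Set X) : Prop :=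
  ∃ C : Set X, IsClosed C ∧ C ⊆ B ∧ locNorm R Cᶜ v = 0

/-- σ-additivity, with convergence of the partial sums in norm. -/
def SigmaAdditive {X : Type*} [MeasurableSpace X] {E : Type*} [NormedAddCommGroup E]
    (N : Set X → E) : Prop :=
  ∀ A : ℕ → Set X, (∀ n, MeasurableSet (A n)) → Pairwise (Function.onFun Disjoint A) →
    Tendsto (fun n => ∑ k ∈ Finset.range n, N (A k)) atTop (𝓝 (N (⋃ k, A k)))

/-- A local vector measure on the normed `R`-module `V`. -/
structure IsLocalVectorMeasure {X : Type*} [TopologicalSpace X] [MeasurableSpace X]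
    (R : Subring (X →ᵇ ℝ)) {V : Type*} [NormedAddCommGroup V] [NormedSpace ℝ V] [Module R V]
    (N : Set X → V →L[ℝ] ℝ) : Prop where
  sigma_additive : SigmaAdditive N
  weakly_local : ∀ A : Set X, IsOpen A → ∀ v : V, locNorm R A v = 0 → N A v = 0

/-- The total variation `|N|(B)`, as the supremum of `Σ ‖N(A_i)‖` over finite Borel
partitions of `B`. -/
def totalVar {X : Type*} [MeasurableSpace X] {E : Type*} [NormedAddCommGroup E]
    (N : Set X → E) (B : Set X) : ℝ≥0∞ :=
  ⨆ (n : ℕ) (A : Fin n → Set X)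
    (_ : (∀ i, MeasurableSet (A i)) ∧ Pairwise (Function.onFun Disjoint A) ∧ (⋃ i, A i) = B),
      ∑ i, (‖N (A i)‖₊ : ℝ≥0∞)

/-- Tightness of a functional `F ∈ V'` with respect to `R`. -/
def IsTight {X : Type*} [TopologicalSpace X] (R : Subring (X →ᵇ ℝ)) {V : Type*}
    [NormedAddCommGroup V] [NormedSpace ℝ V] [Module R V] (F : V →L[ℝ] ℝ) : Prop :=
  ∀ (v : V) (f : ℕ → ↥R),
    (∀ x, Antitone fun n => ((f n : X →ᵇ ℝ)) x) →
    (∀ x, Tendsto (fun n => ((f n : X →ᵇ ℝ)) x) atTop (𝓝 (0:ℝ))) →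
    Tendsto (fun n => F ((f n) • v)) atTop (𝓝 (0:ℝ))

/-!
`≤`: near `x` one has `|φ| < |φ(x)| + ε`, so for a test function `f` supported there,
`f • (φ • v) = (f φ) • v` with `‖f φ‖ ≤ |φ(x)| + ε`.

`≥`: for `0 < c < |φ(x)|` one has `|φ| ≥ c` on a neighbourhood `B` of `x`, and there `φ` can be
inverted approximately inside `R`: a test function `f` supported in `B` splits as `h φ + g` with
`‖h‖ ≤ 1/c` and `‖g‖` arbitrarily small, whence `c ‖v‖_{|B} ≤ ‖φ v‖_{|B}`.
-/

section Division

variable {X : Type*} [TopologicalSpace X] {R : Subring (X →ᵇ ℝ)}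

lemma norm_le_of_forall_mem_tsupport {f : X →ᵇ ℝ} {C : ℝ} (hC : 0 ≤ C)
    (h : ∀ y ∈ tsupport f, |f y| ≤ C) : ‖f‖ ≤ C := by
  refine (norm_le hC).2 fun y => ?_
  by_cases hy : y ∈ tsupport f
  · exact h y hy
  · simpa [image_eq_zero_of_notMem_tsupport hy] using hC

lemma exists_mul_mem_Icc_of_le_abs (hR : ∀ c : ℝ, const X c ∈ R) (φ : R) {c : ℝ} (hc : 0 < c) :
    ∃ ψ : R, ∃ δ > 0, ∀ y, (ψ : X →ᵇ ℝ) y * (φ : X →ᵇ ℝ) y ∈ Icc 0 1 ∧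
      (c ≤ |(φ : X →ᵇ ℝ) y| → δ ≤ (ψ : X →ᵇ ℝ) y * (φ : X →ᵇ ℝ) y) := by
  set M := max ‖(φ : X →ᵇ ℝ)‖ c
  have hM : 0 < M := lt_max_of_lt_right hc
  refine ⟨⟨const X (M ^ 2)⁻¹, hR _⟩ * φ, c ^ 2 / M ^ 2, by positivity, fun y => ?_⟩
  have hψφ : ((⟨const X (M ^ 2)⁻¹, hR _⟩ * φ : R) : X →ᵇ ℝ) y * (φ : X →ᵇ ℝ) y
      = |(φ : X →ᵇ ℝ) y| ^ 2 / M ^ 2 := by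
    simp [div_eq_inv_mul, sq, mul_assoc]
  have hφM : |(φ : X →ᵇ ℝ) y| ≤ M := ((φ : X →ᵇ ℝ).norm_coe_le_norm y).trans (le_max_left _ _)
  rw [hψφ]
  refine ⟨⟨by positivity, ?_⟩, fun hcφ => by gcongr⟩
  rw [div_le_one (by positivity)]
  exact pow_le_pow_left₀ (abs_nonneg _) hφM 2

/-- `R` has no inverses; with `ψ` from `exists_mul_mem_Icc_of_le_abs`, `h = ψ f ∑_{j<k} uʲ`,
`u = 1 - ψ φ`, is a truncated geometric series for `f / φ`, and `f - h φ = f uᵏ`. -/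
lemma exists_eq_mul_add_of_le_abs (hR : ∀ c : ℝ, const X c ∈ R) {φ f : R} {c ε : ℝ}
    (hc : 0 < c) (hε : 0 < ε) (hφ : ∀ y ∈ tsupport (f : X →ᵇ ℝ), c ≤ |(φ : X →ᵇ ℝ) y|)
    (hf : ‖(f : X →ᵇ ℝ)‖ ≤ 1) :
    ∃ h g : R, f = h * φ + g ∧ tsupport (h : X →ᵇ ℝ) ⊆ tsupport (f : X →ᵇ ℝ) ∧
      ‖(h : X →ᵇ ℝ)‖ ≤ c⁻¹ ∧ ‖(g : X →ᵇ ℝ)‖ ≤ ε := by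
  obtain ⟨ψ, δ, hδ, hψφ⟩ := exists_mul_mem_Icc_of_le_abs hR φ hc
  obtain ⟨k, hk⟩ := exists_pow_lt_of_lt_one hε (sub_lt_self 1 hδ)
  set u : R := 1 - ψ * φ
  set h : R := ψ * (∑ j ∈ Finset.range k, u ^ j) * f
  have hdec : f = h * φ + f * u ^ k := by
    linear_combination (-f) * mul_neg_geom_sum u k
  have hu : ∀ y, (u : X →ᵇ ℝ) y = 1 - (ψ : X →ᵇ ℝ) y * (φ : X →ᵇ ℝ) y := fun y => by simp [u]
  have hu0 : ∀ y, 0 ≤ (u : X →ᵇ ℝ) y := fun y => by rw [hu]; linarith [(hψφ y).1.2]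
  have hu1 : ∀ y, (u : X →ᵇ ℝ) y ≤ 1 := fun y => by rw [hu]; linarith [(hψφ y).1.1]
  have hfy : ∀ y, |(f : X →ᵇ ℝ) y| ≤ 1 := fun y => ((f : X →ᵇ ℝ).norm_coe_le_norm y).trans hf
  refine ⟨h, f * u ^ k, hdec, tsupport_mul_subset_right, ?_, ?_⟩
  · refine norm_le_of_forall_mem_tsupport (inv_nonneg.2 hc.le) fun y hy => ?_
    have hyf : y ∈ tsupport (f : X →ᵇ ℝ) := tsupport_mul_subset_right hy
    have hhφ : (h : X →ᵇ ℝ) y * (φ : X →ᵇ ℝ) y = (f : X →ᵇ ℝ) y * (1 - (u : X →ᵇ ℝ) y ^ k) := by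
      have := congrArg (fun g : R => (g : X →ᵇ ℝ) y) hdec
      simp only [Subring.coe_add, Subring.coe_mul, SubmonoidClass.coe_pow,
        BoundedContinuousFunction.coe_add, BoundedContinuousFunction.coe_mul,
        BoundedContinuousFunction.coe_pow, Pi.add_apply, Pi.mul_apply, Pi.pow_apply] at this
      linarith
    have huk : |1 - (u : X →ᵇ ℝ) y ^ k| ≤ 1 := abs_le.2
      ⟨by linarith [pow_le_one₀ (hu0 y) (hu1 y) (n := k)], by linarith [pow_nonneg (hu0 y) k]⟩
    rw [← one_div, le_div_iff₀ hc]
    calc |(h : X →ᵇ ℝ) y| * c ≤ |(h : X →ᵇ ℝ) y| * |(φ : X →ᵇ ℝ) y| := by gcongr; exact hφ y hyf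
      _ = |(f : X →ᵇ ℝ) y| * |1 - (u : X →ᵇ ℝ) y ^ k| := by rw [← abs_mul, hhφ, abs_mul]
      _ ≤ 1 * 1 := mul_le_mul (hfy y) huk (abs_nonneg _) zero_le_one
      _ = 1 := one_mul 1
  · refine norm_le_of_forall_mem_tsupport hε.le fun y hy => ?_
    have hyf : y ∈ tsupport (f : X →ᵇ ℝ) := tsupport_mul_subset_left hy
    have huδ : (u : X →ᵇ ℝ) y ≤ 1 - δ := by rw [hu]; linarith [(hψφ y).2 (hφ y hyf)]
    simp only [Subring.coe_mul, SubmonoidClass.coe_pow, BoundedContinuousFunction.coe_mul,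
      BoundedContinuousFunction.coe_pow, Pi.mul_apply, Pi.pow_apply, abs_mul, abs_pow,
      abs_of_nonneg (hu0 y)]
    calc |(f : X →ᵇ ℝ) y| * (u : X →ᵇ ℝ) y ^ k ≤ 1 * (1 - δ) ^ k :=
          mul_le_mul (hfy y) (pow_le_pow_left₀ (hu0 y) huδ k) (pow_nonneg (hu0 y) k) zero_le_one
      _ ≤ ε := by linarith

end Division

section LocNorm

variable {X : Type*} [TopologicalSpace X] {R : Subring (X →ᵇ ℝ)}
  {V : Type*} [NormedAddCommGroup V] [Module R V]

lemma NormSMulCompat.norm_smul_le (hnorm : NormSMulCompat R V) (f : R) (v : V) :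
    ‖f • v‖ ≤ ‖(f : X →ᵇ ℝ)‖ * ‖v‖ := by
  simpa using hnorm {0} (fun _ => f) (fun _ => v) _ _ (norm_nonneg _) (norm_nonneg _)
    (by simp) (by simp) (by simp)

lemma zero_mem_locNorm_set (A : Set X) (v : V) :
    (0 : ℝ) ∈ {r : ℝ | ∃ f : R, tsupport (f : X →ᵇ ℝ) ⊆ A ∧ ‖(f : X →ᵇ ℝ)‖ ≤ 1 ∧
      r = ‖f • v‖} :=
  ⟨0, by simp [tsupport], by simp, by simp⟩

lemma bddAbove_locNorm_set (hnorm : NormSMulCompat R V) (A : Set X) (v : V) :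
    BddAbove {r : ℝ | ∃ f : R, tsupport (f : X →ᵇ ℝ) ⊆ A ∧ ‖(f : X →ᵇ ℝ)‖ ≤ 1 ∧
      r = ‖f • v‖} := by
  refine ⟨‖v‖, ?_⟩
  rintro _ ⟨f, -, hf, rfl⟩
  exact (hnorm.norm_smul_le f v).trans (mul_le_of_le_one_left (norm_nonneg v) hf)

lemma locNorm_le {A : Set X} {v : V} {C : ℝ}
    (h : ∀ f : R, tsupport (f : X →ᵇ ℝ) ⊆ A → ‖(f : X →ᵇ ℝ)‖ ≤ 1 → ‖f • v‖ ≤ C) :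
    locNorm R A v ≤ C :=
  csSup_le ⟨0, zero_mem_locNorm_set A v⟩ (by rintro _ ⟨f, hA, hf, rfl⟩; exact h f hA hf)

lemma norm_smul_le_locNorm (hnorm : NormSMulCompat R V) {A : Set X} {f : R}
    (hA : tsupport (f : X →ᵇ ℝ) ⊆ A) (hf : ‖(f : X →ᵇ ℝ)‖ ≤ 1) (v : V) :
    ‖f • v‖ ≤ locNorm R A v :=
  le_csSup (bddAbove_locNorm_set hnorm A v) ⟨f, hA, hf, rfl⟩

lemma locNorm_nonneg (hnorm : NormSMulCompat R V) (A : Set X) (v : V) : 0 ≤ locNorm R A v :=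
  le_csSup (bddAbove_locNorm_set hnorm A v) (zero_mem_locNorm_set A v)

lemma locNorm_mono (hnorm : NormSMulCompat R V) {A B : Set X} (hAB : A ⊆ B) (v : V) :
    locNorm R A v ≤ locNorm R B v :=
  locNorm_le fun _ hA hf => norm_smul_le_locNorm hnorm (hA.trans hAB) hf v

lemma germNorm_le_locNorm (hnorm : NormSMulCompat R V) {A : Set X} (hA : IsOpen A) {x : X}
    (hx : x ∈ A) (v : V) : germNorm R v x ≤ locNorm R A v :=
  csInf_le ⟨0, by rintro _ ⟨B, -, -, rfl⟩; exact locNorm_nonneg hnorm B v⟩ ⟨A, hA, hx, rfl⟩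

lemma le_germNorm {v : V} {x : X} {C : ℝ}
    (h : ∀ A : Set X, IsOpen A → x ∈ A → C ≤ locNorm R A v) : C ≤ germNorm R v x :=
  le_csInf ⟨_, univ, isOpen_univ, mem_univ x, rfl⟩ (by rintro _ ⟨A, hA, hx, rfl⟩; exact h A hA hx)

lemma germNorm_nonneg (hnorm : NormSMulCompat R V) (v : V) (x : X) : 0 ≤ germNorm R v x :=
  le_germNorm fun A _ _ => locNorm_nonneg hnorm A v

end LocNorm

section Homogeneity

variable {X : Type*} [TopologicalSpace X] {R : Subring (X →ᵇ ℝ)}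
  {V : Type*} [NormedAddCommGroup V] [NormedSpace ℝ V] [Module R V]

lemma norm_smul_le_mul_locNorm (hR : ∀ c : ℝ, const X c ∈ R) (hconst : ConstSMulCompat R V)
    (hnorm : NormSMulCompat R V) {A : Set X} {f : R} {c : ℝ} (hc : 0 < c)
    (hA : tsupport (f : X →ᵇ ℝ) ⊆ A) (hf : ‖(f : X →ᵇ ℝ)‖ ≤ c) (v : V) :
    ‖f • v‖ ≤ c * locNorm R A v := by
  set g : R := ⟨const X c⁻¹, hR _⟩ * f
  have hg : ‖(g : X →ᵇ ℝ)‖ ≤ 1 := calc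
    ‖(g : X →ᵇ ℝ)‖ ≤ ‖const X c⁻¹‖ * ‖(f : X →ᵇ ℝ)‖ := norm_mul_le _ _
    _ ≤ ‖c⁻¹‖ * c := by gcongr; exact norm_const_le _
    _ = 1 := by rw [Real.norm_of_nonneg (inv_nonneg.2 hc.le), inv_mul_cancel₀ hc.ne']
  have hgv : g • v = c⁻¹ • f • v := by rw [mul_smul, hconst]
  calc ‖f • v‖ = c * ‖g • v‖ := by
        rw [hgv, norm_smul c⁻¹ (f • v), Real.norm_of_nonneg (inv_nonneg.2 hc.le),
          mul_inv_cancel_left₀ hc.ne']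
    _ ≤ c * locNorm R A v := by
        gcongr
        exact norm_smul_le_locNorm hnorm (tsupport_mul_subset_right.trans hA) hg v

lemma locNorm_smul_le (hR : ∀ c : ℝ, const X c ∈ R) (hconst : ConstSMulCompat R V)
    (hnorm : NormSMulCompat R V) {A : Set X} {φ : R} {c : ℝ} (hc : 0 < c)
    (hφ : ∀ y ∈ A, |(φ : X →ᵇ ℝ) y| ≤ c) (v : V) :
    locNorm R A (φ • v) ≤ c * locNorm R A v := by
  refine locNorm_le fun f hA hf => ?_
  have hfφ : ‖((f * φ : R) : X →ᵇ ℝ)‖ ≤ c := by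
    refine norm_le_of_forall_mem_tsupport hc.le fun y hy => ?_
    have hyA : y ∈ A := hA (tsupport_mul_subset_left hy)
    calc |((f * φ : R) : X →ᵇ ℝ) y| = |(f : X →ᵇ ℝ) y| * |(φ : X →ᵇ ℝ) y| := by simp [abs_mul]
      _ ≤ 1 * c := mul_le_mul (((f : X →ᵇ ℝ).norm_coe_le_norm y).trans hf) (hφ y hyA)
          (abs_nonneg _) zero_le_one
      _ = c := one_mul c
  rw [← mul_smul]
  exact norm_smul_le_mul_locNorm hR hconst hnorm hc (tsupport_mul_subset_left.trans hA) hfφ v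

lemma mul_locNorm_le_locNorm_smul (hR : ∀ c : ℝ, const X c ∈ R) (hconst : ConstSMulCompat R V)
    (hnorm : NormSMulCompat R V) {A : Set X} {φ : R} {c : ℝ} (hc : 0 < c)
    (hφ : ∀ y ∈ A, c ≤ |(φ : X →ᵇ ℝ) y|) (v : V) :
    c * locNorm R A v ≤ locNorm R A (φ • v) := by
  rw [← le_div_iff₀' hc]
  refine locNorm_le fun f hA hf => ?_
  have hε : ∀ ε > 0, ‖f • v‖ ≤ locNorm R A (φ • v) / c + ε * ‖v‖ := fun ε hε => by
    obtain ⟨h, g, rfl, hhA, hh, hg⟩ :=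
      exists_eq_mul_add_of_le_abs hR hc hε (fun y hy => hφ y (hA hy)) hf
    calc ‖(h * φ + g) • v‖ ≤ ‖h • φ • v‖ + ‖g • v‖ := by
          rw [add_smul, mul_smul]; exact norm_add_le _ _
      _ ≤ c⁻¹ * locNorm R A (φ • v) + ε * ‖v‖ := by
          gcongr
          · exact norm_smul_le_mul_locNorm hR hconst hnorm (inv_pos.2 hc) (hhA.trans hA) hh _
          · exact (hnorm.norm_smul_le g v).trans (by gcongr)
      _ = locNorm R A (φ • v) / c + ε * ‖v‖ := by rw [inv_mul_eq_div]
  have hlim : Tendsto (fun ε => locNorm R A (φ • v) / c + ε * ‖v‖) (𝓝[>] 0)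
      (𝓝 (locNorm R A (φ • v) / c)) := by
    have : Continuous fun ε : ℝ => locNorm R A (φ • v) / c + ε * ‖v‖ := by fun_prop
    simpa using (this.tendsto 0).mono_left nhdsWithin_le_nhds
  exact ge_of_tendsto hlim (eventually_nhdsWithin_of_forall hε)

end Homogeneity

section GermNorm

variable {X : Type*} [TopologicalSpace X] {R : Subring (X →ᵇ ℝ)}
  {V : Type*} [NormedAddCommGroup V] [NormedSpace ℝ V] [Module R V]

lemma germNorm_smul_le (hR : ∀ c : ℝ, const X c ∈ R) (hconst : ConstSMulCompat R V)
    (hnorm : NormSMulCompat R V) {φ : R} {x : X} {c : ℝ} (hc : |(φ : X →ᵇ ℝ) x| < c) (v : V) :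
    germNorm R (φ • v) x ≤ c * germNorm R v x := by
  have hc0 : 0 < c := (abs_nonneg _).trans_lt hc
  rw [← div_le_iff₀' hc0]
  refine le_germNorm fun B hB hxB => ?_
  set A := B ∩ {y | |(φ : X →ᵇ ℝ) y| < c}
  have hA : IsOpen A := hB.inter (isOpen_lt (map_continuous _).abs continuous_const)
  rw [div_le_iff₀' hc0]
  calc germNorm R (φ • v) x ≤ locNorm R A (φ • v) := germNorm_le_locNorm hnorm hA ⟨hxB, hc⟩ _
    _ ≤ c * locNorm R A v := locNorm_smul_le hR hconst hnorm hc0 (fun y hy => hy.2.le) v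
    _ ≤ c * locNorm R B v := by gcongr; exact locNorm_mono hnorm inter_subset_left v

lemma mul_germNorm_le_germNorm_smul (hR : ∀ c : ℝ, const X c ∈ R)
    (hconst : ConstSMulCompat R V) (hnorm : NormSMulCompat R V) {φ : R} {x : X} {c : ℝ}
    (hc0 : 0 < c) (hc : c < |(φ : X →ᵇ ℝ) x|) (v : V) :
    c * germNorm R v x ≤ germNorm R (φ • v) x := by
  refine le_germNorm fun A hA hxA => ?_
  set B := A ∩ {y | c < |(φ : X →ᵇ ℝ) y|}
  have hB : IsOpen B := hA.inter (isOpen_lt continuous_const (map_continuous _).abs)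
  calc c * germNorm R v x ≤ c * locNorm R B v := by
        gcongr; exact germNorm_le_locNorm hnorm hB ⟨hxA, hc⟩ v
    _ ≤ locNorm R B (φ • v) := mul_locNorm_le_locNorm_smul hR hconst hnorm hc0
        (fun y hy => hy.2.le) v
    _ ≤ locNorm R A (φ • v) := locNorm_mono hnorm inter_subset_left _

end GermNorm

theorem statement1_general {X : Type*} [MetricSpace X]
    {V : Type*} [NormedAddCommGroup V] [NormedSpace ℝ V]
    (R : Subring (X →ᵇ ℝ)) [Module R V]
    (hR : ApproximatesOpenSets R) (hconst : ConstSMulCompat R V) (hnorm : NormSMulCompat R V)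
    (φ : ↥R) (v : V) (x : X) :
    germNorm R (φ • v) x = |(φ : X →ᵇ ℝ) x| * germNorm R v x := by
  set a := |(φ : X →ᵇ ℝ) x|
  have hlim : ∀ l, l ≤ 𝓝 a → Tendsto (fun c => c * germNorm R v x) l (𝓝 (a * germNorm R v x)) :=
    fun l hl => ((continuous_mul_const _).tendsto a).mono_left hl
  apply le_antisymm
  · exact ge_of_tendsto (hlim (𝓝[>] a) nhdsWithin_le_nhds) <| eventually_nhdsWithin_of_forall
      fun c hc => germNorm_smul_le hR.const_mem hconst hnorm hc v
  · rcases (abs_nonneg _ : 0 ≤ a).eq_or_lt with ha | ha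
    · rw [show a = 0 from ha.symm, zero_mul]; exact germNorm_nonneg hnorm _ x
    · exact le_of_tendsto (hlim (𝓝[<] a) nhdsWithin_le_nhds) <|
        eventually_of_mem (Ioo_mem_nhdsLT ha) fun c hc =>
          mul_germNorm_le_germNorm_smul hR.const_mem hconst hnorm hc.1 hc.2 v

/-- for `φ ∈ R`, `v ∈ V` and `x ∈ X` one has
`|φ v|_g(x) = |φ(x)| · |v|_g(x)`. -/
theorem statement1 {X : Type*} [MetricSpace X] [CompleteSpace X]
    [TopologicalSpace.SeparableSpace X]
    {V : Type*} [NormedAddCommGroup V] [NormedSpace ℝ V]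
    (R : Subring (X →ᵇ ℝ)) [Module R V]
    (hR : ApproximatesOpenSets R) (hconst : ConstSMulCompat R V) (hnorm : NormSMulCompat R V)
    (φ : ↥R) (v : V) (x : X) :
    germNorm R (φ • v) x = |(φ : X →ᵇ ℝ) x| * germNorm R v x :=
  statement1_general R hR hconst hnorm φ v x
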